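/- Let (s_j : A_{j+1} → A_j)_{j≥0} be a sequence of continuous maps and F = ∪_j (mapping cylinder of s_j) the infinite telescope, glued end to end. If A_0 is a single point, then F is contractible. -/

import Mathlib

open Set

variable {A : ℕ → Type*} [∀ j, TopologicalSpace (A j)]

/-- The gluing relation of the infinite telescope of the maps `s_j : A_{j+1} → A_j`. -/
def telRel (s : ∀ j, A (j + 1) → A j) :
    (Σ j, A j × unitInterval) → (Σ j, A j × unitInterval) → Prop :=
  fun a b => ∃ j x, a = ⟨j + 1, (x, 1)⟩ ∧ b = ⟨j, (s j x, 0)⟩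

/-- The infinite telescope `F = ∪_j Cyl(s_j)`, glued end to end. -/
def Telescope (s : ∀ j, A (j + 1) → A j) : Type _ := Quot (telRel s)

instance (s : ∀ j, A (j + 1) → A j) : TopologicalSpace (Telescope s) :=
  inferInstanceAs (TopologicalSpace (Quot (telRel s)))
/-
Give the point `(x, t)` of the `j`-th cylinder the height `j + 1 - t`; the gluing
`(x, 1) ~ (s j x, 0)` respects heights, and height `0` is the point `A 0`. Each point `x ∈ A j`
starts a ray that descends through the cylinders `j, j - 1, …, 0` (passing through `s j x`,
`s (j - 1) (s j x)`, …) and is continuous in `x` and the height. Moving every point to `1 - τ`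
times its height along its ray is well defined on the quotient, starts at the identity and ends
at the constant map. It is built as a map `F → C(I, F)`, whose continuity only has to be checked
on each cylinder; uncurrying it is legitimate because `I` is locally compact.
-/

open unitInterval

set_option linter.unusedSectionVars false

namespace Telescope

variable (s : ∀ j, A (j + 1) → A j)

def mk (j : ℕ) (x : A j) (t : I) : Telescope s := Quot.mk _ ⟨j, (x, t)⟩

theorem mk_succ_one (j : ℕ) (x : A (j + 1)) : mk s (j + 1) x 1 = mk s j (s j x) 0 :=
  Quot.sound ⟨j, x, rfl, rfl⟩

theorem continuous_mk (j : ℕ) : Continuous fun p : A j × I => mk s j p.1 p.2 :=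
  continuous_quot_mk.comp (@continuous_sigmaMk _ (fun j => A j × I) _ j)

/-- The coordinate in the `j`-th cylinder of the point at height `r`, clamped to `I`. -/
noncomputable def cylCoord (j : ℕ) (r : ℝ) : I := projIcc 0 1 zero_le_one ((j : ℝ) + 1 - r)

theorem cylCoord_height (j : ℕ) (t : I) : cylCoord j ((j : ℝ) + 1 - t) = t := by
  rw [cylCoord, sub_sub_cancel, projIcc_val]

theorem cylCoord_succ_self (j : ℕ) : cylCoord (j + 1) ((j : ℝ) + 1) = 1 :=
  projIcc_of_right_le _ (by push_cast; linarith)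

theorem cylCoord_self_succ (j : ℕ) : cylCoord j ((j : ℝ) + 1) = 0 :=
  projIcc_of_le_left _ (by linarith)

theorem continuous_cylCoord (j : ℕ) : Continuous (cylCoord j) :=
  continuous_projIcc.comp (continuous_const.sub continuous_id)

theorem continuous_mk_cylCoord (j : ℕ) :
    Continuous fun p : A j × ℝ => mk s j p.1 (cylCoord j p.2) :=
  (continuous_mk s j).comp (continuous_fst.prodMk ((continuous_cylCoord j).comp continuous_snd))

noncomputable def ray : ∀ j, A j → ℝ → Telescope s
  | 0, x, r => mk s 0 x (cylCoord 0 r)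
  | j + 1, x, r =>
    if r ≤ (j : ℝ) + 1 then ray j (s j x) r else mk s (j + 1) x (cylCoord (j + 1) r)

theorem ray_succ_of_le {j : ℕ} (x : A (j + 1)) {r : ℝ} (hr : r ≤ (j : ℝ) + 1) :
    ray s (j + 1) x r = ray s j (s j x) r :=
  if_pos hr

theorem ray_eq_mk {j : ℕ} (x : A j) {r : ℝ}
    (hjr : (j : ℝ) ≤ r) (hrj : r ≤ (j : ℝ) + 1) : ray s j x r = mk s j x (cylCoord j r) := by
  induction j with
  | zero => rfl
  | succ j ih =>
    push_cast at hjr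
    by_cases hr : r ≤ (j : ℝ) + 1
    · obtain rfl : r = (j : ℝ) + 1 := le_antisymm hr hjr
      rw [ray_succ_of_le s x hr, ih _ (by linarith) le_rfl, cylCoord_self_succ,
        cylCoord_succ_self, mk_succ_one]
    · exact if_neg hr

theorem ray_height (j : ℕ) (x : A j) (t : I) : ray s j x ((j : ℝ) + 1 - t) = mk s j x t := by
  rw [ray_eq_mk s x (by linarith [t.2.2]) (by linarith [t.2.1]), cylCoord_height]

theorem ray_zero [Subsingleton (A 0)] (j : ℕ) (x : A j) (x₀ : A 0) :
    ray s j x 0 = mk s 0 x₀ 1 := by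
  induction j with
  | zero =>
    rw [Subsingleton.elim x x₀]
    exact congrArg _ (projIcc_of_right_le _ (by norm_num))
  | succ j ih => rw [ray_succ_of_le s x (by positivity), ih]

theorem continuous_ray (hs : ∀ j, Continuous (s j)) (j : ℕ) :
    Continuous fun p : A j × ℝ => ray s j p.1 p.2 := by
  induction j with
  | zero => exact continuous_mk_cylCoord s 0
  | succ j ih =>
    refine Continuous.if_le (ih.comp (((hs j).comp continuous_fst).prodMk continuous_snd))
      (continuous_mk_cylCoord s (j + 1)) continuous_snd continuous_const ?_
    rintro ⟨x, r⟩ (rfl : r = (j : ℝ) + 1)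
    rw [ray_eq_mk s _ (by linarith) le_rfl, cylCoord_self_succ, cylCoord_succ_self,
      mk_succ_one]

noncomputable def contraction (hs : ∀ j, Continuous (s j)) :
    C(Telescope s, C(I, Telescope s)) where
  toFun := Quot.lift
    (fun p => ⟨fun τ => ray s p.1 p.2.1 ((1 - τ) * ((p.1 : ℝ) + 1 - p.2.2)),
      (continuous_ray s hs p.1).comp (continuous_const.prodMk
        ((continuous_const.sub continuous_subtype_val).mul continuous_const))⟩)
    (by
      rintro _ _ ⟨j, x, rfl, rfl⟩
      ext τ
      simp only [ContinuousMap.coe_mk, Icc.coe_one, Icc.coe_zero, Nat.cast_succ, sub_zero,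
        add_sub_cancel_right]
      exact ray_succ_of_le s x (mul_le_of_le_one_left (by positivity) (by linarith [τ.2.1])))
  continuous_toFun := by
    refine continuous_quot_lift _ (continuous_sigma fun j => ?_)
    refine ContinuousMap.continuous_of_continuous_uncurry _ ?_
    show Continuous fun q : (A j × I) × I => ray s j q.1.1 ((1 - q.2) * ((j : ℝ) + 1 - q.1.2))
    exact (continuous_ray s hs j).comp (continuous_fst.fst.prodMk
      ((continuous_const.sub (continuous_subtype_val.comp continuous_snd)).mul
        (continuous_const.sub (continuous_subtype_val.comp continuous_fst.snd))))

theorem contraction_zero (hs : ∀ j, Continuous (s j)) (q : Telescope s) :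
    contraction s hs q 0 = q := by
  induction q using Quot.ind with
  | mk p =>
    obtain ⟨j, x, t⟩ := p
    show ray s j x ((1 - 0) * ((j : ℝ) + 1 - t)) = mk s j x t
    rw [sub_zero, one_mul, ray_height]

theorem contraction_one [Subsingleton (A 0)] (hs : ∀ j, Continuous (s j)) (x₀ : A 0)
    (q : Telescope s) : contraction s hs q 1 = mk s 0 x₀ 1 := by
  induction q using Quot.ind with
  | mk p =>
    obtain ⟨j, x, t⟩ := p
    show ray s j x ((1 - 1) * ((j : ℝ) + 1 - t)) = mk s 0 x₀ 1
    rw [sub_self, zero_mul, ray_zero]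

noncomputable def homotopyConst [Subsingleton (A 0)] (hs : ∀ j, Continuous (s j)) (x₀ : A 0) :
    (ContinuousMap.id (Telescope s)).Homotopy (.const _ (mk s 0 x₀ 1)) where
  toContinuousMap := (contraction s hs).uncurry.comp .prodSwap
  map_zero_left := contraction_zero s hs
  map_one_left := contraction_one s hs x₀

end Telescope

/-- If `A 0` is a single point, then the infinite telescope of the maps `s_j` is
contractible. -/
theorem telescope_contractible (s : ∀ j, C(A (j + 1), A j))
    (h1 : Nonempty (A 0)) (h2 : Subsingleton (A 0)) :
    ContractibleSpace (Telescope fun j => s j) := by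
  obtain ⟨x₀⟩ := h1
  rw [contractible_iff_id_nullhomotopic]
  exact ⟨_, ⟨Telescope.homotopyConst _ (fun j => (s j).continuous) x₀⟩⟩
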